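/- arXiv:2209.12670 — 3 statements merged into one kernel-verified Lean document; each statement's English description precedes it below -/
import Mathlib

section
/- For every integer n ≥ 1, 2·∫₀^∞ e^{-x²} dx ≤ (1/√n) · ∏_{k=1}^{n} (2k/(2k-1)). -/
/-!
By the Gaussian integral the left side is `√π`, so the claim is `π n ≤ P n ^ 2` for
`P n = ∏ 2k/(2k-1)`. Now `P n ^ 2 = (2n+1) W n` with `W` Wallis' product, and the sine-integral
bound `W n ≥ (2n+1)/(2n+2) · π/2` gives `P n ^ 2 ≥ π (2n+1)² / (4n+4) ≥ π n`.
-/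

open MeasureTheory Real

noncomputable def wallisRatio (n : ℕ) : ℝ := ∏ k ∈ Finset.Icc 1 n, (2 * (k : ℝ)) / (2 * k - 1)

lemma wallisRatio_nonneg (n : ℕ) : 0 ≤ wallisRatio n := by
  refine Finset.prod_nonneg fun k hk => div_nonneg (by positivity) ?_
  have : (1 : ℝ) ≤ k := by exact_mod_cast (Finset.mem_Icc.mp hk).1
  linarith

lemma wallisRatio_succ (n : ℕ) :
    wallisRatio (n + 1) = wallisRatio n * ((2 * n + 2) / (2 * n + 1)) := by
  rw [wallisRatio, wallisRatio, Finset.prod_Icc_succ_top (Nat.le_add_left 1 n)]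
  push_cast
  ring_nf

lemma wallisRatio_sq (n : ℕ) : wallisRatio n ^ 2 = Wallis.W n * (2 * n + 1) := by
  induction n with
  | zero => simp [wallisRatio, Wallis.W]
  | succ n ih =>
    rw [wallisRatio_succ, Wallis.W_succ, mul_pow, ih]
    push_cast
    field_simp
    ring

lemma pi_mul_le_wallisRatio_sq (n : ℕ) : π * n ≤ wallisRatio n ^ 2 := by
  calc π * n ≤ (2 * n + 1) / (2 * n + 2) * (π / 2) * (2 * n + 1) := by
        rw [div_mul_eq_mul_div, div_mul_eq_mul_div, le_div_iff₀ (by positivity)]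
        nlinarith [pi_pos]
    _ ≤ Wallis.W n * (2 * n + 1) := by gcongr; exact Wallis.le_W n
    _ = wallisRatio n ^ 2 := (wallisRatio_sq n).symm

theorem two_probability_integral_le_wallis (n : ℕ) (hn : 1 ≤ n) :
    2 * ∫ x in Set.Ioi (0 : ℝ), Real.exp (-x ^ 2) ≤
      1 / Real.sqrt n * ∏ k ∈ Finset.Icc 1 n, (2 * (k : ℝ)) / (2 * k - 1) := by
  have hsqrt_n : Real.sqrt n ≠ 0 := Real.sqrt_ne_zero'.mpr (by exact_mod_cast hn)
  calc 2 * ∫ x in Set.Ioi (0 : ℝ), Real.exp (-x ^ 2) = Real.sqrt π := by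
        have h := integral_gaussian_Ioi 1
        simp only [div_one, neg_mul, one_mul] at h
        rw [h]
        ring
    _ = Real.sqrt (π * n) / Real.sqrt n := by
        rw [Real.sqrt_mul pi_pos.le, mul_div_cancel_right₀ _ hsqrt_n]
    _ ≤ Real.sqrt (wallisRatio n ^ 2) / Real.sqrt n := by
        gcongr
        exact pi_mul_le_wallisRatio_sq n
    _ = 1 / Real.sqrt n * wallisRatio n := by
        rw [Real.sqrt_sq (wallisRatio_nonneg n)]
        ring
end

section
/- For every integer n ≥ 1, √(2n/(2n+1)) · (1/√n) · ∏_{k=1}^{n} (2k/(2k-1)) ≤ 2·∫₀^∞ e^{-x²} dx. -/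
open MeasureTheory Real

/-!
Squaring the left-hand side gives `2 / (2n + 1) · ∏ (2k / (2k - 1))²`, which is twice Mathlib's
Wallis partial product `W n = ∏_{i<n} (2i+2)²/((2i+1)(2i+3))`; since `W n ≤ π / 2` and the
Gaussian integral over `(0, ∞)` is `√π / 2`, both sides are compared after taking square roots.
-/

lemma prod_two_mul_div_two_mul_sub_one_nonneg (n : ℕ) :
    0 ≤ ∏ k ∈ Finset.Icc 1 n, (2 * (k : ℝ)) / (2 * k - 1) := by
  refine Finset.prod_nonneg fun k hk => div_nonneg (by positivity) ?_
  have : (1 : ℝ) ≤ k := by exact_mod_cast (Finset.mem_Icc.mp hk).1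
  linarith

namespace Real.Wallis

theorem W_eq_prod_sq_div (n : ℕ) :
    W n = (∏ k ∈ Finset.Icc 1 n, (2 * (k : ℝ)) / (2 * k - 1)) ^ 2 / (2 * n + 1) := by
  induction n with
  | zero => simp [W]
  | succ n ih =>
    rw [W_succ, ih, Finset.prod_Icc_succ_top (by omega)]
    push_cast
    have h₁ : (2 * (n : ℝ) + 1) ≠ 0 := by positivity
    have h₂ : (2 * (n : ℝ) + 3) ≠ 0 := by positivity
    rw [show 2 * ((n : ℝ) + 1) - 1 = 2 * n + 1 by ring,
      show 2 * ((n : ℝ) + 1) + 1 = 2 * n + 3 by ring]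
    field_simp

theorem sqrt_two_mul_W (n : ℕ) :
    √(2 * W n) = √(2 / (2 * n + 1)) * ∏ k ∈ Finset.Icc 1 n, (2 * (k : ℝ)) / (2 * k - 1) := by
  rw [W_eq_prod_sq_div, mul_div_assoc', mul_div_right_comm,
    sqrt_mul (by positivity), sqrt_sq (prod_two_mul_div_two_mul_sub_one_nonneg n)]

end Real.Wallis

lemma sqrt_two_mul_div_mul_one_div_sqrt {x : ℝ} (hx : 0 < x) :
    √(2 * x / (2 * x + 1)) * (1 / √x) = √(2 / (2 * x + 1)) := by
  rw [one_div, ← sqrt_inv, ← sqrt_mul (by positivity)]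
  congr 1
  field_simp

lemma integral_exp_neg_sq_Ioi : ∫ x in Set.Ioi (0 : ℝ), exp (-x ^ 2) = √π / 2 := by
  simpa using integral_gaussian_Ioi 1

theorem wallis_le_two_probability_integral (n : ℕ) (hn : 1 ≤ n) :
    Real.sqrt (2 * n / (2 * n + 1)) * (1 / Real.sqrt n) *
        ∏ k ∈ Finset.Icc 1 n, (2 * (k : ℝ)) / (2 * k - 1) ≤
      2 * ∫ x in Set.Ioi (0 : ℝ), Real.exp (-x ^ 2) := by
  have hn : (0 : ℝ) < n := by exact_mod_cast hn
  rw [integral_exp_neg_sq_Ioi, mul_div_cancel₀ _ two_ne_zero,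
    sqrt_two_mul_div_mul_one_div_sqrt hn, ← Wallis.sqrt_two_mul_W]
  exact sqrt_le_sqrt (by linarith [Wallis.W_le n])
end

section
/- (Wallis's formula, second form) The limit as n → ∞ of √n · ∏_{k=1}^{n} (2k/(2k+1)) = √n · (2/3)·(4/5)·(6/7)···(2n/(2n+1)) equals √π/2. -/
/-!
Squaring the product `P n = ∏_{k ≤ n} 2k/(2k+1)` gives Wallis's partial product:
`P n ^ 2 * (2n+1) = W n = ∏_{k < n} (2k+2)/(2k+1) · (2k+2)/(2k+3)`, which tends to `π/2`.
Hence `n · P n ^ 2 = n/(2n+1) · W n → 1/2 · π/2 = π/4`, and taking square roots gives `√π/2`.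
-/

open Real Filter Topology

theorem Real.Wallis.W_eq_prod_sq_mul (n : ℕ) :
    Wallis.W n = (∏ k ∈ Finset.Icc 1 n, (2 * (k : ℝ)) / (2 * k + 1)) ^ 2 * (2 * n + 1) := by
  induction n with
  | zero => simp [Wallis.W]
  | succ n ih =>
    rw [Finset.prod_Icc_succ_top (by omega), Wallis.W_succ, ih]
    have h1 : (2 * (n : ℝ) + 1) ≠ 0 := by positivity
    have h3 : (2 * (n : ℝ) + 3) ≠ 0 := by positivity
    push_cast
    field_simp
    ring

theorem tendsto_natCast_mul_prod_sq_nhds_pi_div_four :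
    Tendsto (fun n : ℕ => n * (∏ k ∈ Finset.Icc 1 n, (2 * (k : ℝ)) / (2 * k + 1)) ^ 2)
      atTop (𝓝 (π / 4)) := by
  have hW : Tendsto (fun n : ℕ => (n : ℝ) / (2 * n + 1) * Wallis.W n) atTop
      (𝓝 (1 / 2 * (π / 2))) :=
    Stirling.tendsto_self_div_two_mul_self_add_one.mul Wallis.tendsto_W_nhds_pi_div_two
  rw [show π / 4 = 1 / 2 * (π / 2) by ring]
  refine hW.congr fun n => ?_
  have hn : (2 * (n : ℝ) + 1) ≠ 0 := by positivity
  rw [Wallis.W_eq_prod_sq_mul]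
  field_simp

theorem wallis_formula_second_form :
    Tendsto (fun n : ℕ =>
        Real.sqrt n * ∏ k ∈ Finset.Icc 1 n, (2 * (k : ℝ)) / (2 * k + 1))
      atTop (nhds (Real.sqrt π / 2)) := by
  have hlim : √(π / 4) = √π / 2 := by
    rw [sqrt_div' π (by norm_num : (0 : ℝ) ≤ 4), show (4 : ℝ) = 2 ^ 2 by norm_num,
      sqrt_sq zero_le_two]
  rw [← hlim]
  refine tendsto_natCast_mul_prod_sq_nhds_pi_div_four.sqrt.congr fun n => ?_
  rw [sqrt_mul n.cast_nonneg, sqrt_sq (by positivity)]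
end
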